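/- Let M be an A-bimodule and let ∇ be a connection (not necessarily flat) on the left A-module M with respect to the universal differential calculus. Define σ̃: M⊗A → A⊗M by σ̃(m⊗a) := −Σ m_A ⊗ (m_M a), where ∇(m) = Σ m_A ⊗ m_M and m_M a uses the given right A-action on M. Then the right universal symbol is left A-linear on the kernel of the action: for every element x = Σᵢ mᵢ⊗aᵢ ∈ M⊗A with Σᵢ mᵢ aᵢ = 0 and every a ∈ A, σ̃(Σᵢ (a mᵢ)⊗aᵢ) equals the result of multiplying the first tensor factor of σ̃(x) by a on the left. -/

import Mathlib

open TensorProduct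

variable (K A M : Type*) [Field K] [Ring A] [Algebra K A]
  [AddCommGroup M] [Module K M] [Module A M] [IsScalarTower K A M]

/-- The action map `A ⊗ M → M`, `a ⊗ m ↦ a • m`. -/
noncomputable def actMap : A ⊗[K] M →ₗ[K] M :=
  TensorProduct.lift (LinearMap.mk₂ K (fun a m => a • m)
    (fun a b m => add_smul a b m)
    (fun k a m => smul_assoc k a m)
    (fun a m n => smul_add a m n)
    (fun k a m => (smul_comm k a m).symm))

/-- Left multiplication by `a : A` on a left `A`-module, as a `K`-linear map. -/
def lsmulMap (a : A) : M →ₗ[K] M where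
  toFun := fun m => a • m
  map_add' := fun x y => smul_add a x y
  map_smul' := fun k m => (smul_comm k a m).symm

/-- `a ↦ a • n` as a `K`-linear map `A → M`. -/
def smulBy (n : M) : A →ₗ[K] M where
  toFun := fun a => a • n
  map_add' := fun a b => add_smul a b n
  map_smul' := fun k a => smul_assoc k a n

/-- `D : M → A ⊗ M` is a connection with respect to the universal differential
calculus. -/
def IsConnection (D : M →ₗ[K] A ⊗[K] M) : Prop :=
  (∀ m : M, actMap K A M (D m) = 0) ∧
  ∀ (a : A) (m : M),
    D (a • m) = LinearMap.rTensor M (LinearMap.mulLeft K a) (D m)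
      + (1 : A) ⊗ₜ[K] (a • m) - a ⊗ₜ[K] m

/-- Flatness of a connection: `Σ 1 ⊗ m_A ⊗ m_M = Σ m_A ⊗ D(m_M)`. -/
def IsFlatConnection (D : M →ₗ[K] A ⊗[K] M) : Prop :=
  ∀ m : M, (1 : A) ⊗ₜ[K] (D m) = LinearMap.lTensor A D (D m)

/-- The induced right operation `m·a := a m − Σ m_A a m_M`. -/
noncomputable def rop (D : M →ₗ[K] A ⊗[K] M) (m : M) (a : A) : M :=
  a • m - actMap K A M (LinearMap.rTensor M (LinearMap.mulRight K a) (D m))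

open MulOpposite in
/-- For a right `A`-module `M` (a module over `Aᵐᵒᵖ`), the map `M ⊗ A → M`,
`m ⊗ a ↦ m a`. -/
noncomputable def ractOp [Module Aᵐᵒᵖ M] [IsScalarTower K Aᵐᵒᵖ M] :
    M ⊗[K] A →ₗ[K] M :=
  TensorProduct.lift (LinearMap.mk₂ K (fun m a => op a • m)
    (fun m₁ m₂ a => smul_add (op a) m₁ m₂)
    (fun k m a => (smul_comm k (op a) m).symm)
    (fun m a b => by simp only [op_add, add_smul])
    (fun k m a => by simp only [op_smul, smul_assoc]))

/-- The right universal symbol `σ̃ : M ⊗ A → A ⊗ M`, `m ⊗ a ↦ −Σ m_A ⊗ (m_M a)`,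
of a connection `D` on the `A`-bimodule `M`. -/
noncomputable def rightSymbol [Module Aᵐᵒᵖ M] [IsScalarTower K Aᵐᵒᵖ M]
    (D : M →ₗ[K] A ⊗[K] M) : M ⊗[K] A →ₗ[K] A ⊗[K] M :=
  -((LinearMap.lTensor A (ractOp K A M)).comp
      (((TensorProduct.assoc K A M A).toLinearMap).comp
        (LinearMap.rTensor A D)))

/-!
By the Leibniz rule, `σ̃((a m) ⊗ b) = a · σ̃(m ⊗ b) - 1 ⊗ a (m b) + a ⊗ (m b)`. The two
correction terms depend on `x = Σ mᵢ ⊗ bᵢ` only through `Σ mᵢ bᵢ`, so they vanish on the kernel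
of the action.
-/

section RightSymbol

open MulOpposite

variable {K A M} [Module Aᵐᵒᵖ M] [IsScalarTower K Aᵐᵒᵖ M]

omit [Module A M] [IsScalarTower K A M] in
theorem rightSymbol_tmul (D : M →ₗ[K] A ⊗[K] M) (m : M) (b : A) :
    rightSymbol K A M D (m ⊗ₜ b)
      = -LinearMap.lTensor A (DistribSMul.toLinearMap K M (op b)) (D m) := by
  suffices ∀ t : A ⊗[K] M,
      LinearMap.lTensor A (ractOp K A M) (TensorProduct.assoc K A M A (t ⊗ₜ b))
        = LinearMap.lTensor A (DistribSMul.toLinearMap K M (op b)) t from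
    congrArg Neg.neg (this (D m))
  intro t
  induction t using TensorProduct.induction_on with
  | zero => simp
  | tmul c n => rfl
  | add s t hs ht => simp only [add_tmul, map_add, hs, ht]

omit [IsScalarTower K A M] in
theorem rightSymbol_smul_tmul [SMulCommClass A Aᵐᵒᵖ M] (D : M →ₗ[K] A ⊗[K] M) (a : A)
    (hD : ∀ m : M, D (a • m) = LinearMap.rTensor M (LinearMap.mulLeft K a) (D m)
      + (1 : A) ⊗ₜ[K] (a • m) - a ⊗ₜ[K] m) (m : M) (b : A) :
    rightSymbol K A M D ((a • m) ⊗ₜ b)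
      = LinearMap.rTensor M (LinearMap.mulLeft K a) (rightSymbol K A M D (m ⊗ₜ b))
        - (1 : A) ⊗ₜ[K] (a • op b • m) + a ⊗ₜ[K] (op b • m) := by
  have hcomm : LinearMap.lTensor A (DistribSMul.toLinearMap K M (op b))
      (LinearMap.rTensor M (LinearMap.mulLeft K a) (D m))
        = LinearMap.rTensor M (LinearMap.mulLeft K a)
          (LinearMap.lTensor A (DistribSMul.toLinearMap K M (op b)) (D m)) :=
    LinearMap.congr_fun
      ((LinearMap.lTensor_comp_rTensor (f := LinearMap.mulLeft K a) ..).trans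
        (LinearMap.rTensor_comp_lTensor ..).symm) (D m)
  rw [rightSymbol_tmul, rightSymbol_tmul, hD]
  simp only [map_add, map_sub, map_neg, hcomm, LinearMap.lTensor_tmul,
    DistribSMul.toLinearMap_apply]
  rw [← smul_comm a (op b) m]
  abel

theorem rightSymbol_rTensor_lsmulMap [SMulCommClass A Aᵐᵒᵖ M] (D : M →ₗ[K] A ⊗[K] M) (a : A)
    (hD : ∀ m : M, D (a • m) = LinearMap.rTensor M (LinearMap.mulLeft K a) (D m)
      + (1 : A) ⊗ₜ[K] (a • m) - a ⊗ₜ[K] m) (x : M ⊗[K] A) :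
    rightSymbol K A M D (LinearMap.rTensor A (lsmulMap K A M a) x)
      = LinearMap.rTensor M (LinearMap.mulLeft K a) (rightSymbol K A M D x)
        - (1 : A) ⊗ₜ[K] (a • ractOp K A M x) + a ⊗ₜ[K] ractOp K A M x := by
  induction x using TensorProduct.induction_on with
  | zero => simp
  | tmul m b => exact rightSymbol_smul_tmul D a hD m b
  | add x y hx hy =>
    simp only [map_add, hx, hy, smul_add, tmul_add]
    abel

end RightSymbol

/-- Let `M` be an `A`-bimodule and `D` a connection on the left
`A`-module `M` with respect to the universal differential calculus. The right
universal symbol `σ̃(m⊗a) = −Σ m_A ⊗ (m_M a)` is left `A`-linear on the kernel of the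
action map `M ⊗ A → M`, `Σ mᵢ ⊗ aᵢ ↦ Σ mᵢ aᵢ`. -/
theorem rightSymbol_left_linear_on_ker [Module Aᵐᵒᵖ M] [IsScalarTower K Aᵐᵒᵖ M]
    [SMulCommClass A Aᵐᵒᵖ M]
    (D : M →ₗ[K] A ⊗[K] M) (hconn : IsConnection K A M D)
    (a : A) (x : M ⊗[K] A) (hx : ractOp K A M x = 0) :
    rightSymbol K A M D (LinearMap.rTensor A (lsmulMap K A M a) x)
      = LinearMap.rTensor M (LinearMap.mulLeft K a) (rightSymbol K A M D x) := by
  rw [rightSymbol_rTensor_lsmulMap D a (hconn.2 a) x, hx, smul_zero, tmul_zero, tmul_zero,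
    sub_zero, add_zero]
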